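/- If S is a finite set of unit vectors in EuclideanSpace ℝ (Fin 3) such that the graph on S in which two vectors are adjacent if and only if they are orthogonal has chromatic number 4, then some vector in S has at least one irrational coordinate. -/

import Mathlib

open scoped RealInnerProductSpace

/-- The orthogonality graph on a finite set `S` of vectors in `ℝ³`: two
(distinct) vectors of `S` are adjacent iff they are orthogonal. -/
def orthGraphOn (S : Finset (EuclideanSpace ℝ (Fin 3))) :
    SimpleGraph {x : EuclideanSpace ℝ (Fin 3) // x ∈ S} where
  Adj u v := (u : EuclideanSpace ℝ (Fin 3)) ≠ (v : EuclideanSpace ℝ (Fin 3)) ∧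
    ⟪(u : EuclideanSpace ℝ (Fin 3)), (v : EuclideanSpace ℝ (Fin 3))⟫ = 0
  symm := ⟨fun u v h => by
    exact ⟨h.1.symm, by rw [real_inner_comm]; exact h.2⟩⟩
  loopless := ⟨fun u h => h.1 rfl⟩

/-!
A rational unit vector is `t • A` with `A` a primitive integer vector, and then `∑ Aᵢ²` is a
perfect square. Squares are `0` or `1` modulo `4`, and `∑ Aᵢ²` is congruent modulo `4` to the
number of odd coordinates of `A`; with at most three coordinates, not all even, exactly one
coordinate of `A` is odd. Colouring a vector by the position of that coordinate is a proper
`3`-colouring of the orthogonality graph: for two vectors of the same colour the dot product of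
their primitive integer vectors is odd, hence nonzero.
-/

open Finset

variable {ι : Type*} [Fintype ι]

theorem ZMod.intCast_sq_four_eq_ite_odd (a : ℤ) : (a : ZMod 4) ^ 2 = if Odd a then 1 else 0 := by
  have h4 : (4 : ZMod 4) = 0 := rfl
  split_ifs with ha
  · obtain ⟨k, rfl⟩ := ha
    push_cast
    linear_combination (k ^ 2 + k) * h4
  · obtain ⟨k, rfl⟩ := Int.not_odd_iff_even.mp ha
    push_cast
    linear_combination k ^ 2 * h4

theorem ZMod.sum_intCast_sq_four_eq_card_odd (A : ι → ℤ) :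
    ∑ i, (A i : ZMod 4) ^ 2 = #{i | Odd (A i)} := by
  simp only [ZMod.intCast_sq_four_eq_ite_odd, sum_boole]

theorem Int.exists_odd_iff_eq_of_isSquare_sum_sq (hι : Fintype.card ι ≤ 3) {A : ι → ℤ}
    (hodd : ∃ i, Odd (A i)) (hsq : IsSquare (∑ i, A i ^ 2)) : ∃ i, ∀ j, Odd (A j) ↔ j = i := by
  obtain ⟨m, hm⟩ := hsq
  have hmod : (#{i | Odd (A i)} : ZMod 4) = m * m := by
    rw [← ZMod.sum_intCast_sq_four_eq_card_odd]
    exact_mod_cast congrArg (Int.cast : ℤ → ZMod 4) hm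
  have hle : #{i | Odd (A i)} ≤ 3 := (card_filter_le _ _).trans hι
  have hne : #{i | Odd (A i)} ≠ 0 := by
    obtain ⟨i, hi⟩ := hodd
    exact card_ne_zero_of_mem (mem_filter.mpr ⟨mem_univ i, hi⟩)
  have hsq4 : ∀ r : ZMod 4, r * r = 0 ∨ r * r = 1 := by decide
  have h01 := hmod ▸ hsq4 m
  have hone : #{i | Odd (A i)} = 1 := by
    generalize #{i | Odd (A i)} = n at h01 hle hne
    interval_cases n <;> first | rfl | omega | (revert h01; decide)
  obtain ⟨i, hi⟩ := card_eq_one.mp hone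
  exact ⟨i, fun j ↦ by simpa using Finset.ext_iff.mp hi j⟩

theorem Int.odd_sum_mul_of_odd_iff_eq {A B : ι → ℤ} {i : ι} (hA : ∀ j, Odd (A j) ↔ j = i)
    (hB : ∀ j, Odd (B j) ↔ j = i) : Odd (∑ j, A j * B j) := by
  classical
  rw [Fintype.sum_eq_add_sum_compl i]
  refine (((hA i).2 rfl).mul ((hB i).2 rfl)).add_even (even_sum _ fun j hj ↦ ?_)
  have hji : j ≠ i := by simpa using hj
  exact (Int.not_odd_iff_even.mp fun h ↦ hji ((hA j).1 h)).mul_right _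

theorem Rat.exists_eq_mul_intCast_gcd_eq_one [Nonempty ι] (q : ι → ℚ) :
    ∃ (t : ℚ) (A : ι → ℤ), (∀ i, q i = t * A i) ∧ univ.gcd A = 1 := by
  obtain ⟨⟨b, hb⟩, hint⟩ := IsLocalization.exist_integer_multiples (nonZeroDivisors ℤ) univ q
  choose B hB using fun i ↦ hint i (mem_univ i)
  obtain ⟨A, hBA, hA⟩ := extract_gcd B univ_nonempty
  have hb0 : (b : ℚ) ≠ 0 := by exact_mod_cast nonZeroDivisors.ne_zero hb
  refine ⟨univ.gcd B / b, A, fun i ↦ ?_, hA⟩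
  have hi := hB i
  rw [hBA i (mem_univ i)] at hi
  simp only [algebraMap_int_eq, eq_intCast, Int.cast_mul, zsmul_eq_mul] at hi
  field_simp
  linear_combination -hi

theorem Rat.exists_eq_mul_intCast_odd_iff_eq (hι : Fintype.card ι ≤ 3) {q : ι → ℚ}
    (hq : ∑ i, q i ^ 2 = 1) :
    ∃ (t : ℚ) (A : ι → ℤ) (i : ι), t ≠ 0 ∧ (∀ j, q j = t * A j) ∧ ∀ j, Odd (A j) ↔ j = i := by
  have : Nonempty ι := by
    by_contra h
    simp [not_nonempty_iff.mp h] at hq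
  obtain ⟨t, A, hqA, hgcd⟩ := exists_eq_mul_intCast_gcd_eq_one q
  have hsum : t ^ 2 * ∑ i, (A i : ℚ) ^ 2 = 1 := by
    simp only [← hq, hqA, mul_pow, mul_sum]
  have ht : t ≠ 0 := by
    rintro rfl
    simp at hsum
  have hodd : ∃ i, Odd (A i) := by
    by_contra! h
    have h2 : (2 : ℤ) ∣ univ.gcd A :=
      dvd_gcd fun i _ ↦ even_iff_two_dvd.mp (Int.not_odd_iff_even.mp (h i))
    rw [hgcd] at h2
    norm_num at h2
  have hsq : IsSquare (∑ i, A i ^ 2) := by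
    rw [← Rat.isSquare_intCast_iff]
    refine ⟨t⁻¹, ?_⟩
    push_cast
    field_simp
    linear_combination hsum
  obtain ⟨i, hi⟩ := Int.exists_odd_iff_eq_of_isSquare_sum_sq hι hodd hsq
  exact ⟨t, A, i, ht, hqA, hi⟩

theorem Rat.exists_coloring_of_orthogonal_unit_vectors (hι : Fintype.card ι ≤ 3) :
    ∃ c : {q : ι → ℚ // ∑ i, q i ^ 2 = 1} → ι,
      ∀ q r, ∑ i, q.1 i * r.1 i = 0 → c q ≠ c r := by
  choose t A c ht hqA hA using fun q : {q : ι → ℚ // ∑ i, q i ^ 2 = 1} ↦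
    exists_eq_mul_intCast_odd_iff_eq hι q.2
  refine ⟨c, fun q r horth hc ↦ ?_⟩
  have hodd := Int.odd_sum_mul_of_odd_iff_eq (hA q) (hc ▸ hA r)
  have hdot : t q * t r * ((∑ i, A q i * A r i : ℤ) : ℚ) = 0 := by
    rw [← horth, Int.cast_sum, mul_sum]
    refine sum_congr rfl fun i _ ↦ ?_
    rw [hqA, hqA]
    push_cast
    ring
  have hzero : ∑ i, A q i * A r i = 0 := by
    exact_mod_cast (mul_eq_zero.mp hdot).resolve_left (mul_ne_zero (ht q) (ht r))
  rw [hzero] at hodd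
  exact Int.not_odd_zero hodd

theorem EuclideanSpace.sum_sq_eq_one_of_norm_eq_one {x : EuclideanSpace ℝ ι} {q : ι → ℚ}
    (hq : ∀ i, x i = q i) (hx : ‖x‖ = 1) : ∑ i, q i ^ 2 = 1 := by
  have h := EuclideanSpace.real_norm_sq_eq x
  simp only [hx, hq] at h
  exact_mod_cast h.symm

theorem EuclideanSpace.sum_mul_eq_zero_of_inner_eq_zero {x y : EuclideanSpace ℝ ι} {q r : ι → ℚ}
    (hq : ∀ i, x i = q i) (hr : ∀ i, y i = r i) (h : ⟪x, y⟫ = 0) : ∑ i, q i * r i = 0 := by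
  simp only [PiLp.inner_apply, RCLike.inner_apply, conj_trivial, hq, hr] at h
  have hcast : ((∑ i, q i * r i : ℚ) : ℝ) = 0 := by
    push_cast
    simpa only [mul_comm] using h
  exact_mod_cast hcast

/-- Any finite set of unit vectors in `ℝ³` whose orthogonality graph has
chromatic number four must contain a vector with an irrational coordinate. -/
theorem four_chromatic_set_has_irrational_coordinate
    (S : Finset (EuclideanSpace ℝ (Fin 3)))
    (hS : ∀ x ∈ S, ‖x‖ = 1)
    (hchrom : (orthGraphOn S).chromaticNumber = 4) :
    ∃ x ∈ S, ∃ i : Fin 3, ¬ ∃ q : ℚ, x i = (q : ℝ) := by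
  by_contra! hrat
  choose q hq using hrat
  obtain ⟨c, hc⟩ := Rat.exists_coloring_of_orthogonal_unit_vectors (ι := Fin 3) (by simp)
  let color : (orthGraphOn S).Coloring (Fin 3) :=
    SimpleGraph.Coloring.mk
      (fun v ↦ c ⟨q v v.2, EuclideanSpace.sum_sq_eq_one_of_norm_eq_one (hq v v.2) (hS v v.2)⟩)
      fun huv ↦ hc _ _ (EuclideanSpace.sum_mul_eq_zero_of_inner_eq_zero (hq _ _) (hq _ _) huv.2)
  have h3 := color.colorable.chromaticNumber_le
  rw [hchrom, Fintype.card_fin] at h3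
  norm_num at h3
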